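/- With P_z(λ) as defined, if λ_k = λ_l then (e^z_{k,l})² P_z(λ) = 0, where e^z_{k,l} = ∑_a z_a y_a^{(k)} ∂/∂y_a^{(l)}. -/

import Mathlib

/-!
Write `X (j, a)` for `y_a^{(j)}`. Every monomial `∏ a, X (f a, a)` of `P` contains exactly one
variable for each index `a`, so `e^z_{k,l}` moves one index from block `l` to block `k`, and the
coefficient of `∏ a, X (g a, a)` in `(e^z_{k,l})² P` is a sum over ordered pairs `a ≠ b` in
`K = g⁻¹ k` of `z_a z_b / R(g_{ab})`, where `g_{ab}` moves `a` and `b` to block `l`. Only the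
factors of the resultant involving `a` or `b` change; with `L = g⁻¹ l` this gives
`1 / R(g_{ab}) = -(z_a - z_b)² ψ(a) ψ(b) / R(g)`, where
`ψ(a) = ∏_{y ∈ L} (z_a - z_y) / ∏_{y ∈ K \ a} (z_a - z_y)`.
If `g_{ab}` has type `λ`, then `λ_k = λ_l` forces `|K| = |L| + 4`, so for `j ≤ 2` the moment
`∑_{a ∈ K} z_a^j ψ(a)` is the coefficient of `x^{|K|-1}` in the Lagrange interpolant of
`x^j ∏_{y ∈ L} (x - z_y)` on the nodes `z_K`, which is zero. Expanding `z_a z_b (z_a - z_b)²`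
writes the coefficient as a combination of products of two moments, one of order `≤ 2`.
-/

open MvPolynomial Finset Function

section Lagrange

variable {ι : Type*} [DecidableEq ι]

lemma prod_erase_mul_prod_erase {R : Type*} [CommRing R] (z : ι → R) {s : Finset ι} {a b : ι}
    (ha : a ∈ s) (hb : b ∈ s) (hab : a ≠ b) :
    (∏ y ∈ s.erase a, (z a - z y)) * ∏ y ∈ s.erase b, (z b - z y) =
      -(z a - z b) ^ 2 * ∏ y ∈ (s.erase a).erase b, (z a - z y) * (z b - z y) := by
  rw [← mul_prod_erase (s.erase a) _ (mem_erase.2 ⟨hab.symm, hb⟩),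
    ← mul_prod_erase (s.erase b) _ (mem_erase.2 ⟨hab, ha⟩), erase_right_comm, prod_mul_distrib]
  ring

variable {F : Type*} [Field F] {s : Finset ι} {v : ι → F}

lemma sum_eval_div_prod_erase_eq_zero (hvs : Set.InjOn v s) {p : Polynomial F}
    (hp : p.natDegree + 1 < #s) :
    ∑ i ∈ s, p.eval (v i) / ∏ j ∈ s.erase i, (v i - v j) = 0 := by
  have hdeg : p.degree < #s :=
    Polynomial.degree_le_natDegree.trans_lt (by exact_mod_cast (by omega : p.natDegree < #s))
  rw [← Lagrange.coeff_eq_sum hvs hdeg, Polynomial.coeff_eq_zero_of_natDegree_lt (by omega)]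

lemma sum_sum_mul_sub_sq_eq_zero (hvs : Set.InjOn v s) {p : Polynomial F}
    (hp : p.natDegree + 4 ≤ #s) :
    ∑ a ∈ s, ∑ b ∈ s, v a * v b * (v a - v b) ^ 2 *
      (p.eval (v a) / ∏ y ∈ s.erase a, (v a - v y)) *
      (p.eval (v b) / ∏ y ∈ s.erase b, (v b - v y)) = 0 := by
  set ψ := fun a => p.eval (v a) / ∏ y ∈ s.erase a, (v a - v y)
  have hmoment : ∀ j ≤ 2, ∑ a ∈ s, v a ^ j * ψ a = 0 := by
    intro j hj
    have hdeg : (Polynomial.X ^ j * p).natDegree + 1 < #s := by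
      have hmul := Polynomial.natDegree_mul_le (p := Polynomial.X ^ j) (q := p)
      have hX := Polynomial.natDegree_X_pow_le (R := F) j
      omega
    simpa [ψ, mul_div_assoc] using sum_eval_div_prod_erase_eq_zero hvs hdeg
  calc _ = ∑ a ∈ s, ∑ b ∈ s, (v a ^ 3 * ψ a * (v b ^ 1 * ψ b) + v a ^ 1 * ψ a * (v b ^ 3 * ψ b)
          - 2 * (v a ^ 2 * ψ a * (v b ^ 2 * ψ b))) :=
        sum_congr rfl fun a _ => sum_congr rfl fun b _ => by ring
    _ = (∑ a ∈ s, v a ^ 3 * ψ a) * (∑ b ∈ s, v b ^ 1 * ψ b)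
          + (∑ a ∈ s, v a ^ 1 * ψ a) * (∑ b ∈ s, v b ^ 3 * ψ b)
          - 2 * ((∑ a ∈ s, v a ^ 2 * ψ a) * (∑ b ∈ s, v b ^ 2 * ψ b)) := by
        rw [sum_mul_sum, sum_mul_sum, sum_mul_sum]
        simp only [mul_sum, sum_add_distrib, sum_sub_distrib]
    _ = 0 := by rw [hmoment 1 (by norm_num), hmoment 2 (by norm_num)]; ring

end Lagrange

section Fibers

variable {ι κ : Type*} [Fintype ι] [DecidableEq ι] [DecidableEq κ]

lemma card_filter_update_add (f : ι → κ) (a : ι) (c j : κ) :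
    #{x | update f a c x = j} + (if f a = j then 1 else 0) =
      #{x | f x = j} + (if c = j then 1 else 0) := by
  simp only [card_filter]
  rw [← add_sum_erase _ _ (mem_univ a), ← add_sum_erase univ (fun x => if f x = j then 1 else 0)
    (mem_univ a), update_self, sum_congr rfl fun x hx => by rw [update_of_ne (ne_of_mem_erase hx)]]
  ring

lemma card_filter_update_update_add (g : ι → κ) {a b : ι} (hab : a ≠ b) {k : κ} (ha : g a = k)
    (hb : g b = k) (l j : κ) :
    #{x | update (update g a l) b l x = j} + 2 * (if k = j then 1 else 0) =
      #{x | g x = j} + 2 * (if l = j then 1 else 0) := by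
  have h1 := card_filter_update_add (update g a l) b l j
  have h2 := card_filter_update_add g a l j
  rw [update_of_ne hab.symm, hb] at h1
  rw [ha] at h2
  omega

end Fibers

section Resultant

variable {ι κ R F : Type*} [Fintype ι] [LinearOrder κ] [CommRing R] [Field F]

/-- `R(z_{I_1}|…|z_{I_m})` for the ordered set partition with blocks `I_j = f⁻¹ j`. -/
def genResultant (z : ι → R) (f : ι → κ) : R := ∏ x, ∏ y with f x < f y, (z x - z y)

lemma genResultant_ne_zero {z : ι → F} (hz : Injective z) (f : ι → κ) : genResultant z f ≠ 0 :=
  prod_ne_zero_iff.2 fun _ _ => prod_ne_zero_iff.2 fun _ hy =>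
    sub_ne_zero.2 (hz.ne (ne_of_apply_ne f (mem_filter.1 hy).2.ne))

variable [DecidableEq ι]

lemma genResultant_eq_mul_prod_compl (z : ι → R) (f : ι → κ) {a b : ι} (hab : a ≠ b)
    (hf : f a = f b) :
    genResultant z f =
      (∏ x ∈ {a, b}ᶜ, ∏ y ∈ {a, b}ᶜ, if f x < f y then z x - z y else 1) *
        ∏ y ∈ {a, b}ᶜ,
          ((if f a < f y then z a - z y else 1) * (if f y < f a then z y - z a else 1) *
            ((if f b < f y then z b - z y else 1) * (if f y < f b then z y - z b else 1))) := by
  have hsplit : ∀ G : ι → R, ∏ x, G x = G a * G b * ∏ x ∈ {a, b}ᶜ, G x := fun G => by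
    rw [← prod_pair hab, prod_mul_prod_compl]
  simp only [genResultant, prod_filter]
  rw [hsplit]
  simp only [hsplit (fun y => if f _ < f y then z _ - z y else 1), hf, lt_irrefl, if_false,
    one_mul, prod_mul_distrib]
  ring

lemma genResultant_mul_prod_filter_eq (z : ι → R) (f : ι → κ) {a b : ι} (hab : a ≠ b)
    (hf : f a = f b) :
    genResultant z f * ∏ y ∈ {a, b}ᶜ with f y = f a, (z a - z y) * (z b - z y) =
      (∏ x ∈ {a, b}ᶜ, ∏ y ∈ {a, b}ᶜ, if f x < f y then z x - z y else 1) *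
        ∏ y ∈ {a, b}ᶜ, (z a - z y) * (z b - z y) := by
  rw [genResultant_eq_mul_prod_compl z f hab hf, prod_filter, mul_assoc, ← prod_mul_distrib]
  congr 1
  refine prod_congr rfl fun y _ => ?_
  -- the factors pairing `y` with `a` and with `b` carry the same sign
  rw [← hf]
  rcases lt_trichotomy (f y) (f a) with h | h | h
  · simp [h, h.ne, h.not_gt]
    ring
  · simp [h]
  · simp [h, h.ne', h.not_gt]

lemma genResultant_mul_prod_filter_eq_of_eqOn_compl (z : ι → R) {f g : ι → κ} {a b : ι}
    (hab : a ≠ b) (hf : f a = f b) (hg : g a = g b)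
    (hfg : ∀ y ∉ ({a, b} : Finset ι), f y = g y) :
    genResultant z f * ∏ y ∈ {a, b}ᶜ with f y = f a, (z a - z y) * (z b - z y) =
      genResultant z g * ∏ y ∈ {a, b}ᶜ with g y = g a, (z a - z y) * (z b - z y) := by
  rw [genResultant_mul_prod_filter_eq z f hab hf, genResultant_mul_prod_filter_eq z g hab hg]
  congr 1
  refine prod_congr rfl fun x hx => prod_congr rfl fun y hy => ?_
  rw [hfg x (mem_compl.1 hx), hfg y (mem_compl.1 hy)]

lemma genResultant_update_update_mul (z : ι → R) {g : ι → κ} {k l : κ} (hkl : k ≠ l) {a b : ι}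
    (hab : a ≠ b) (ha : g a = k) (hb : g b = k) :
    genResultant z (update (update g a l) b l) *
        ((∏ y with g y = l, (z a - z y)) * ∏ y with g y = l, (z b - z y)) =
      genResultant z g *
        ∏ y ∈ (({x | g x = k} : Finset ι).erase a).erase b, (z a - z y) * (z b - z y) := by
  have hkey := genResultant_mul_prod_filter_eq_of_eqOn_compl z (f := update (update g a l) b l)
    (g := g) hab (by simp [hab]) (ha.trans hb.symm) (fun y hy => by
      simp only [mem_insert, mem_singleton, not_or] at hy
      simp [hy.1, hy.2])
  have hL : ({a, b}ᶜ : Finset ι).filter (fun y => update (update g a l) b l y =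
      update (update g a l) b l a) = ({y | g y = l} : Finset ι) := by
    ext y
    by_cases hya : y = a <;> by_cases hyb : y = b <;> simp_all [eq_comm]
  have hK : ({a, b}ᶜ : Finset ι).filter (fun y => g y = g a) =
      (({x | g x = k} : Finset ι).erase a).erase b := by
    ext y
    simp only [mem_filter, mem_compl, mem_insert, mem_singleton, mem_erase, mem_univ, true_and,
      ha]
    tauto
  rwa [hL, hK, prod_mul_distrib] at hkey

lemma inv_genResultant_update_update {z : ι → F} (hz : Injective z) {g : ι → κ} {k l : κ}
    (hkl : k ≠ l) {a b : ι} (hab : a ≠ b) (ha : g a = k) (hb : g b = k) :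
    (genResultant z (update (update g a l) b l))⁻¹ =
      -(genResultant z g)⁻¹ * (z a - z b) ^ 2 *
        ((∏ y with g y = l, (z a - z y)) /
          ∏ y ∈ ({x | g x = k} : Finset ι).erase a, (z a - z y)) *
        ((∏ y with g y = l, (z b - z y)) /
          ∏ y ∈ ({x | g x = k} : Finset ι).erase b, (z b - z y)) := by
  have hmem : ∀ {x}, g x = k → x ∈ ({x | g x = k} : Finset ι) := by simp
  have hW := prod_erase_mul_prod_erase z (hmem ha) (hmem hb) hab
  have hWne : ∀ c, ∏ y ∈ ({x | g x = k} : Finset ι).erase c, (z c - z y) ≠ 0 := fun c =>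
    prod_ne_zero_iff.2 fun y hy => sub_ne_zero.2 (hz.ne (ne_of_mem_erase hy).symm)
  have hRg := genResultant_ne_zero hz g
  have hRg' := genResultant_ne_zero hz (update (update g a l) b l)
  field_simp [hWne a, hWne b]
  linear_combination genResultant z g * hW +
    (z a - z b) ^ 2 * genResultant_update_update_mul z hkl hab ha hb

end Resultant

section GraphMonomial

variable {ι κ R : Type*} [CommSemiring R]

lemma pderiv_prod_X_of_notMem [DecidableEq ι] (f : ι → κ) (l : κ) {a : ι} {s : Finset ι}
    (ha : a ∉ s) :
    pderiv (l, a) (∏ b ∈ s, X (f b, b) : MvPolynomial (κ × ι) R) = 0 := by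
  induction s using Finset.induction_on with
  | empty => simp
  | insert b s hb ih =>
    have hba : (f b, b) ≠ (l, a) := fun h =>
      ha ((Prod.mk.inj h).2 ▸ mem_insert_self b s)
    rw [prod_insert hb, pderiv_mul, ih (fun h => ha (mem_insert_of_mem h)), pderiv_X_of_ne hba]
    simp

variable [Fintype ι]

noncomputable def graphMonomial (f : ι → κ) : MvPolynomial (κ × ι) R := ∏ a, X (f a, a)

variable [DecidableEq ι] [DecidableEq κ]

lemma X_mul_pderiv_graphMonomial (f : ι → κ) (a : ι) (k l : κ) :
    X (k, a) * pderiv (l, a) (graphMonomial f : MvPolynomial (κ × ι) R) =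
      if f a = l then graphMonomial (update f a k) else 0 := by
  have hsplit : ∀ g : ι → κ, (graphMonomial g : MvPolynomial (κ × ι) R) =
      X (g a, a) * ∏ b ∈ univ.erase a, X (g b, b) :=
    fun g => (mul_prod_erase _ _ (mem_univ a)).symm
  rw [hsplit, pderiv_mul, pderiv_prod_X_of_notMem f l (notMem_erase a univ), mul_zero, add_zero]
  split_ifs with hfa
  · rw [hfa, pderiv_X_self, one_mul, hsplit, update_self]
    congr 1
    exact prod_congr rfl fun b hb => by rw [update_of_ne (ne_of_mem_erase hb)]
  · rw [pderiv_X_of_ne (by simpa using hfa), zero_mul, mul_zero]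

def transferCoeff (z : ι → R) (k l : κ) (c : (ι → κ) → R) (g : ι → κ) : R :=
  ∑ a with g a = k, z a * c (update g a l)

lemma transferCoeff_transferCoeff (z : ι → R) {k l : κ} (hkl : k ≠ l) (c : (ι → κ) → R)
    (g : ι → κ) :
    transferCoeff z k l (transferCoeff z k l c) g =
      ∑ a with g a = k, ∑ b ∈ ({x | g x = k} : Finset ι).erase a,
        z a * z b * c (update (update g a l) b l) := by
  simp only [transferCoeff, mul_sum]
  refine sum_congr rfl fun a ha => ?_
  have hinner : ({b | update g a l b = k} : Finset ι) = ({x | g x = k} : Finset ι).erase a := by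
    ext b
    by_cases hba : b = a <;> simp [hba, hkl.symm]
  rw [hinner]
  exact sum_congr rfl fun b _ => by ring

variable [Fintype κ]

lemma sum_sum_filter_update_eq {M : Type*} [AddCommMonoid M] (k l : κ)
    (G : (ι → κ) → (ι → κ) → ι → M) :
    ∑ f : ι → κ, ∑ a with f a = l, G f (update f a k) a =
      ∑ g : ι → κ, ∑ a with g a = k, G (update g a l) g a := by
  simp only [sum_filter]
  rw [sum_comm]
  conv_rhs => rw [sum_comm]
  refine sum_congr rfl fun a _ => ?_
  rw [← sum_filter, ← sum_filter]
  have hback : ∀ f : ι → κ, ∀ c, f a = c → update (update f a k) a c = f := by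
    rintro f c rfl
    rw [update_idem, update_eq_self]
  refine sum_nbij' (fun f => update f a k) (fun g => update g a l) ?_ ?_ ?_ ?_ ?_ <;>
    simp +contextual [hback]

lemma sum_C_mul_X_mul_pderiv_sum (z : ι → R) (k l : κ) (c : (ι → κ) → R) :
    ∑ a, C (z a) * X (k, a) * pderiv (l, a) (∑ f, C (c f) * graphMonomial f) =
      ∑ g, C (transferCoeff z k l c g) * graphMonomial g := by
  have hterm : ∀ a f, C (z a) * X (k, a) * pderiv (l, a) (C (c f) * graphMonomial f) =
      if f a = l then C (z a * c f) * graphMonomial (update f a k) else 0 := by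
    intro a f
    rw [pderiv_C_mul, map_mul, ← mul_ite_zero, ← X_mul_pderiv_graphMonomial]
    ring
  calc _ = ∑ f, ∑ a with f a = l, C (z a * c f) * (graphMonomial (update f a k) :
          MvPolynomial (κ × ι) R) := by
        simp only [map_sum, mul_sum, hterm, sum_filter]
        exact sum_comm
    _ = ∑ g, ∑ a with g a = k, C (z a * c (update g a l)) * graphMonomial g :=
        sum_sum_filter_update_eq k l fun f g a => C (z a * c f) * graphMonomial g
    _ = _ := by simp only [transferCoeff, map_sum, sum_mul]

end GraphMonomial

section PartitionCoeff

variable {ι κ F : Type*} [Fintype ι] [LinearOrder κ] [Field F]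

open Classical in
noncomputable def partitionCoeff (lam : κ → ℕ) (z : ι → F) (f : ι → κ) : F :=
  if ∀ j, #{x | f x = j} = lam j then (genResultant z f)⁻¹ else 0

variable [DecidableEq ι]

open Classical in
lemma partitionCoeff_update_update (lam : κ → ℕ) (z : ι → F) {g : ι → κ} {k l : κ} {a b : ι}
    (hab : a ≠ b) (ha : g a = k) (hb : g b = k) :
    partitionCoeff lam z (update (update g a l) b l) =
      if ∀ j, #{x | g x = j} + 2 * (if l = j then 1 else 0) = lam j + 2 * (if k = j then 1 else 0)
      then (genResultant z (update (update g a l) b l))⁻¹ else 0 := by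
  have hiff : (∀ j, #{x | update (update g a l) b l x = j} = lam j) ↔
      ∀ j, #{x | g x = j} + 2 * (if l = j then 1 else 0) =
        lam j + 2 * (if k = j then 1 else 0) :=
    forall_congr' fun j => by have := card_filter_update_update_add g hab ha hb l j; omega
  unfold partitionCoeff
  by_cases h : ∀ j, #{x | update (update g a l) b l x = j} = lam j
  · rw [if_pos h, if_pos (hiff.1 h)]
  · rw [if_neg h, if_neg (mt hiff.2 h)]

theorem transferCoeff_transferCoeff_partitionCoeff_eq_zero {z : ι → F} (hz : Injective z)
    {lam : κ → ℕ} {k l : κ} (hkl : k ≠ l) (hlam : lam k = lam l) (g : ι → κ) :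
    transferCoeff z k l (transferCoeff z k l (partitionCoeff lam z)) g = 0 := by
  set K : Finset ι := {x | g x = k} with hK
  set L : Finset ι := {x | g x = l} with hL
  have hmemK : ∀ {x}, x ∈ K ↔ g x = k := by simp [K]
  rw [transferCoeff_transferCoeff z hkl]
  by_cases htype : ∀ j, #{x | g x = j} + 2 * (if l = j then 1 else 0) =
      lam j + 2 * (if k = j then 1 else 0)
  swap
  · refine sum_eq_zero fun a ha => sum_eq_zero fun b hb => ?_
    rw [partitionCoeff_update_update lam z (ne_of_mem_erase hb).symm (hmemK.1 ha)
      (hmemK.1 (mem_of_mem_erase hb)), if_neg htype, mul_zero]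
  have hcard : #K = #L + 4 := by
    have hk := htype k
    have hl := htype l
    simp only [hkl, hkl.symm, if_true, if_false, ← hK, ← hL] at hk hl
    omega
  set ψ := fun a => (Lagrange.nodal L z).eval (z a) / ∏ y ∈ K.erase a, (z a - z y)
  have hcoeff : ∀ a ∈ K, ∀ b ∈ K.erase a, partitionCoeff lam z (update (update g a l) b l) =
      -(genResultant z g)⁻¹ * (z a - z b) ^ 2 * ψ a * ψ b := fun a ha b hb => by
    rw [partitionCoeff_update_update lam z (ne_of_mem_erase hb).symm (hmemK.1 ha)
      (hmemK.1 (mem_of_mem_erase hb)), if_pos htype, inv_genResultant_update_update hz hkl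
      (ne_of_mem_erase hb).symm (hmemK.1 ha) (hmemK.1 (mem_of_mem_erase hb))]
    simp only [ψ, Lagrange.eval_nodal, hK, hL]
  calc ∑ a ∈ K, ∑ b ∈ K.erase a, z a * z b * partitionCoeff lam z (update (update g a l) b l)
      = -(genResultant z g)⁻¹ *
          ∑ a ∈ K, ∑ b ∈ K, z a * z b * (z a - z b) ^ 2 * ψ a * ψ b := by
        rw [mul_sum]
        refine sum_congr rfl fun a ha => ?_
        rw [← add_sum_erase K _ ha, sub_self]
        simp only [zero_pow two_ne_zero, mul_zero, zero_mul, zero_add, mul_sum]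
        exact sum_congr rfl fun b hb => by rw [hcoeff a ha b hb]; ring
    _ = 0 := by
        rw [sum_sum_mul_sub_sq_eq_zero hz.injOn (by rw [Lagrange.natDegree_nodal]; omega),
          mul_zero]

end PartitionCoeff

theorem ezkl_sq_annihilates_P_general
    (m n : ℕ) (lam : Fin m → ℕ)
    (z : Fin n → ℂ) (hz : Function.Injective z)
    (k l : Fin m) (hne : k ≠ l) (hlamkl : lam k = lam l)
    (E : MvPolynomial (Fin m × Fin n) ℂ → MvPolynomial (Fin m × Fin n) ℂ)
    (hE : ∀ q, E q = ∑ a : Fin n, C (z a) * X (k, a) * pderiv (l, a) q)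
    (P : MvPolynomial (Fin m × Fin n) ℂ)
    (hP : P = ∑ f ∈ Finset.univ.filter
        (fun f : Fin n → Fin m => ∀ j, (Finset.univ.filter fun a => f a = j).card = lam j),
      C ((∏ a : Fin n, ∏ b ∈ Finset.univ.filter (fun b => f a < f b), (z a - z b))⁻¹) *
        ∏ a : Fin n, X (f a, a)) :
    E (E P) = 0 := by
  have hP' : P = ∑ f, C (partitionCoeff lam z f) * graphMonomial f := by
    rw [hP, sum_filter]
    refine sum_congr rfl fun f _ => ?_
    by_cases htype : ∀ j, #{a | f a = j} = lam j
    · rw [if_pos htype, partitionCoeff, if_pos htype]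
      rfl
    · rw [if_neg htype, partitionCoeff, if_neg htype, C_0, zero_mul]
  have hEc : ∀ c, E (∑ f, C (c f) * graphMonomial f) =
      ∑ g, C (transferCoeff z k l c g) * graphMonomial g :=
    fun c => (hE _).trans (sum_C_mul_X_mul_pderiv_sum z k l c)
  rw [hP', hEc, hEc]
  exact sum_eq_zero fun g _ => by
    rw [transferCoeff_transferCoeff_partitionCoeff_eq_zero hz hne hlamkl, C_0, zero_mul]

/-- With `P_z(λ)` as in the paper, if `λ k = λ l` (for distinct indices `k, l`), then
`(e^z_{k,l})² P_z(λ) = 0`, where `e^z_{k,l} = ∑_a z_a y_a^{(k)} ∂/∂y_a^{(l)}`.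
Here `X (j, a)` stands for `y_a^{(j)}`. -/
theorem ezkl_sq_annihilates_P
    (m n : ℕ) (lam : Fin m → ℕ) (hlam : Antitone lam) (hn : n = ∑ j, lam j)
    (z : Fin n → ℂ) (hz : Function.Injective z)
    (k l : Fin m) (hne : k ≠ l) (hlamkl : lam k = lam l)
    (E : MvPolynomial (Fin m × Fin n) ℂ → MvPolynomial (Fin m × Fin n) ℂ)
    (hE : ∀ q, E q = ∑ a : Fin n, C (z a) * X (k, a) * pderiv (l, a) q)
    (P : MvPolynomial (Fin m × Fin n) ℂ)
    (hP : P = ∑ f ∈ Finset.univ.filter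
        (fun f : Fin n → Fin m => ∀ j, (Finset.univ.filter fun a => f a = j).card = lam j),
      C ((∏ a : Fin n, ∏ b ∈ Finset.univ.filter (fun b => f a < f b), (z a - z b))⁻¹) *
        ∏ a : Fin n, X (f a, a)) :
    E (E P) = 0 :=
  ezkl_sq_annihilates_P_general m n lam z hz k l hne hlamkl E hE P hP
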